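/- arXiv:2602.02544 — 4 statements merged into one kernel-verified Lean document; each statement's English description precedes it below -/
import Mathlib

section
/- Let h₁, h₂ ∈ ℝ^d be nonzero with H_min ≤ ‖h₁‖, ‖h₂‖ ≤ H_max, and let Δ = H_max - H_min. Then ‖h₁ - h₂‖ ≤ Δ + √2 · H_max · √(1 - S_cos(h₁,h₂)). -/
noncomputable def scos {d : ℕ} (x y : EuclideanSpace ℝ (Fin d)) : ℝ :=
  (inner ℝ x y : ℝ) / (‖x‖ * ‖y‖)

/-!
By the law of cosines, `‖x - y‖² = (‖x‖ - ‖y‖)² + 2‖x‖‖y‖(1 - cos ∠(x, y))`. Subadditivity of the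
square root splits `‖x - y‖` into a radial part `|‖x‖ - ‖y‖| ≤ Δ` and an angular part
`√(2‖x‖‖y‖(1 - cos ∠(x, y))) ≤ √2 · H_max · √(1 - cos ∠(x, y))`, and `cos ∠(x, y)` is `S_cos(x, y)`.
-/

open Real InnerProductGeometry

theorem Real.sqrt_add_le_sqrt_add_sqrt {a b : ℝ} (ha : 0 ≤ a) (hb : 0 ≤ b) :
    √(a + b) ≤ √a + √b :=
  Real.sqrt_le_iff.2 ⟨by positivity, by
    nlinarith [Real.sq_sqrt ha, Real.sq_sqrt hb, Real.sqrt_nonneg a, Real.sqrt_nonneg b]⟩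

section InnerProductSpace

variable {V : Type*} [NormedAddCommGroup V] [InnerProductSpace ℝ V]

theorem one_sub_cos_angle_nonneg (x y : V) : 0 ≤ 1 - cos (angle x y) :=
  sub_nonneg.2 (cos_le_one _)

theorem norm_sub_sq_eq_sq_sub_norm_add_mul_one_sub_cos_angle (x y : V) :
    ‖x - y‖ ^ 2 = (‖x‖ - ‖y‖) ^ 2 + 2 * ‖x‖ * ‖y‖ * (1 - cos (angle x y)) := by
  linear_combination
    norm_sub_sq_eq_norm_sq_add_norm_sq_sub_two_mul_norm_mul_norm_mul_cos_angle x y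

theorem norm_sub_le_abs_sub_norm_add_sqrt_one_sub_cos_angle (x y : V) :
    ‖x - y‖ ≤ |‖x‖ - ‖y‖| + √(2 * ‖x‖ * ‖y‖ * (1 - cos (angle x y))) := by
  have hangular : 0 ≤ 2 * ‖x‖ * ‖y‖ * (1 - cos (angle x y)) :=
    mul_nonneg (by positivity) (one_sub_cos_angle_nonneg x y)
  calc ‖x - y‖ = √(‖x - y‖ ^ 2) := (Real.sqrt_sq (norm_nonneg _)).symm
    _ = √((‖x‖ - ‖y‖) ^ 2 + 2 * ‖x‖ * ‖y‖ * (1 - cos (angle x y))) := by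
      rw [norm_sub_sq_eq_sq_sub_norm_add_mul_one_sub_cos_angle]
    _ ≤ √((‖x‖ - ‖y‖) ^ 2) + √(2 * ‖x‖ * ‖y‖ * (1 - cos (angle x y))) :=
      Real.sqrt_add_le_sqrt_add_sqrt (sq_nonneg _) hangular
    _ = |‖x‖ - ‖y‖| + √(2 * ‖x‖ * ‖y‖ * (1 - cos (angle x y))) := by
      rw [Real.sqrt_sq_eq_abs]

end InnerProductSpace

theorem scos_eq_cos_angle {d : ℕ} (x y : EuclideanSpace ℝ (Fin d)) :
    scos x y = cos (angle x y) :=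
  (cos_angle x y).symm

theorem dist_le_of_cosine_general {d : ℕ} (h₁ h₂ : EuclideanSpace ℝ (Fin d))
    (Hmin Hmax : ℝ)
    (hb1 : Hmin ≤ ‖h₁‖) (hb1' : ‖h₁‖ ≤ Hmax)
    (hb2 : Hmin ≤ ‖h₂‖) (hb2' : ‖h₂‖ ≤ Hmax) :
    ‖h₁ - h₂‖ ≤ (Hmax - Hmin) + Real.sqrt 2 * Hmax * Real.sqrt (1 - scos h₁ h₂) := by
  have hHmax : 0 ≤ Hmax := (norm_nonneg _).trans hb1'
  have hradial : |‖h₁‖ - ‖h₂‖| ≤ Hmax - Hmin := abs_sub_le_iff.2 ⟨by linarith, by linarith⟩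
  have hprod : ‖h₁‖ * ‖h₂‖ ≤ Hmax ^ 2 := by
    rw [sq]; exact mul_le_mul hb1' hb2' (norm_nonneg _) hHmax
  have hcos := one_sub_cos_angle_nonneg h₁ h₂
  calc ‖h₁ - h₂‖ ≤ |‖h₁‖ - ‖h₂‖| + √(2 * ‖h₁‖ * ‖h₂‖ * (1 - cos (angle h₁ h₂))) :=
        norm_sub_le_abs_sub_norm_add_sqrt_one_sub_cos_angle h₁ h₂
    _ ≤ (Hmax - Hmin) + √(2 * Hmax ^ 2 * (1 - cos (angle h₁ h₂))) := by
        rw [mul_assoc 2 ‖h₁‖]; gcongr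
    _ = (Hmax - Hmin) + √2 * Hmax * √(1 - scos h₁ h₂) := by
        rw [scos_eq_cos_angle, Real.sqrt_mul (by positivity), Real.sqrt_mul zero_le_two,
          Real.sqrt_sq hHmax]

theorem dist_le_of_cosine {d : ℕ} (h₁ h₂ : EuclideanSpace ℝ (Fin d))
    (h1 : h₁ ≠ 0) (h2 : h₂ ≠ 0) (Hmin Hmax : ℝ)
    (hb1 : Hmin ≤ ‖h₁‖) (hb1' : ‖h₁‖ ≤ Hmax)
    (hb2 : Hmin ≤ ‖h₂‖) (hb2' : ‖h₂‖ ≤ Hmax) :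
    ‖h₁ - h₂‖ ≤ (Hmax - Hmin) + Real.sqrt 2 * Hmax * Real.sqrt (1 - scos h₁ h₂) :=
  dist_le_of_cosine_general h₁ h₂ Hmin Hmax hb1 hb1' hb2 hb2'
end

section
/- Let f : ℝ^d → ℝ^m be L-Lipschitz, and let h₁, h₂ ∈ ℝ^d be nonzero with H_min ≤ ‖hᵢ‖ ≤ H_max. Then ‖f(h₁) - f(h₂)‖ ≤ L(H_max - H_min) + L√2·H_max·√(1 - S_cos(h₁,h₂)). -/
open RealInnerProductSpace

section InnerProductSpace

variable {E : Type*} [NormedAddCommGroup E] [InnerProductSpace ℝ E]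

theorem norm_sub_sq_eq_sq_sub_norm_add (x y : E) :
    ‖x - y‖ ^ 2 = (‖x‖ - ‖y‖) ^ 2 + 2 * (‖x‖ * ‖y‖ - ⟪x, y⟫) := by
  rw [norm_sub_sq_real]
  ring

theorem norm_sub_le_abs_sub_norm_add_sqrt (x y : E) :
    ‖x - y‖ ≤ |‖x‖ - ‖y‖| + √(2 * (‖x‖ * ‖y‖ - ⟪x, y⟫)) := by
  have hangle : 0 ≤ 2 * (‖x‖ * ‖y‖ - ⟪x, y⟫) := by
    linarith [real_inner_le_norm x y]
  have hsq : ‖x - y‖ ^ 2 ≤ (|‖x‖ - ‖y‖| + √(2 * (‖x‖ * ‖y‖ - ⟪x, y⟫))) ^ 2 := by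
    rw [norm_sub_sq_eq_sq_sub_norm_add, add_sq, sq_abs, Real.sq_sqrt hangle]
    have : 0 ≤ 2 * |‖x‖ - ‖y‖| * √(2 * (‖x‖ * ‖y‖ - ⟪x, y⟫)) := by positivity
    linarith
  exact (pow_le_pow_iff_left₀ (norm_nonneg _) (by positivity) two_ne_zero).mp hsq

end InnerProductSpace

section Scos

variable {d : ℕ}

theorem norm_mul_norm_mul_scos (x y : EuclideanSpace ℝ (Fin d)) :
    ‖x‖ * ‖y‖ * scos x y = ⟪x, y⟫ := by
  rcases eq_or_ne (‖x‖ * ‖y‖) 0 with h | h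
  · -- here `x = 0` or `y = 0`, so both sides vanish although `scos x y` is a junk value
    rcases mul_eq_zero.mp h with hx | hy
    · simp [norm_eq_zero.mp hx]
    · simp [norm_eq_zero.mp hy]
  · exact mul_div_cancel₀ _ h

theorem scos_le_one (x y : EuclideanSpace ℝ (Fin d)) : scos x y ≤ 1 :=
  (abs_le.mp (abs_real_inner_div_norm_mul_norm_le_one x y)).2

theorem norm_sub_le_of_norm_mem_Icc {x y : EuclideanSpace ℝ (Fin d)} {Hmin Hmax : ℝ}
    (hx : ‖x‖ ∈ Set.Icc Hmin Hmax) (hy : ‖y‖ ∈ Set.Icc Hmin Hmax) :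
    ‖x - y‖ ≤ (Hmax - Hmin) + √2 * Hmax * √(1 - scos x y) := by
  have hradial : |‖x‖ - ‖y‖| ≤ Hmax - Hmin :=
    abs_sub_le_of_le_of_le hx.1 hx.2 hy.1 hy.2
  have hangular : √(2 * (‖x‖ * ‖y‖ - ⟪x, y⟫)) ≤ √2 * Hmax * √(1 - scos x y) := by
    have hprod : ‖x‖ * ‖y‖ ≤ Hmax ^ 2 := by
      rw [sq]
      exact mul_le_mul hx.2 hy.2 (norm_nonneg _) ((norm_nonneg _).trans hx.2)
    have hHmax : 0 ≤ Hmax := (norm_nonneg _).trans hx.2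
    have hcos : 0 ≤ 1 - scos x y := sub_nonneg.mpr (scos_le_one x y)
    calc √(2 * (‖x‖ * ‖y‖ - ⟪x, y⟫))
        = √(2 * (‖x‖ * ‖y‖) * (1 - scos x y)) := by
          rw [← norm_mul_norm_mul_scos x y]
          ring_nf
      _ ≤ √(2 * Hmax ^ 2 * (1 - scos x y)) := by gcongr
      _ = √2 * Hmax * √(1 - scos x y) := by
          rw [Real.sqrt_mul (by positivity), Real.sqrt_mul (by norm_num), Real.sqrt_sq hHmax]
  linarith [norm_sub_le_abs_sub_norm_add_sqrt x y]

end Scos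

theorem lipschitz_cosine_bound_general {d m : ℕ}
    (f : EuclideanSpace ℝ (Fin d) → EuclideanSpace ℝ (Fin m))
    (L : NNReal) (hf : LipschitzWith L f)
    (h₁ h₂ : EuclideanSpace ℝ (Fin d))
    (Hmin Hmax : ℝ)
    (hb1 : Hmin ≤ ‖h₁‖) (hb1' : ‖h₁‖ ≤ Hmax)
    (hb2 : Hmin ≤ ‖h₂‖) (hb2' : ‖h₂‖ ≤ Hmax) :
    ‖f h₁ - f h₂‖ ≤
      (L : ℝ) * (Hmax - Hmin) +
        (L : ℝ) * Real.sqrt 2 * Hmax * Real.sqrt (1 - scos h₁ h₂) := by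
  calc ‖f h₁ - f h₂‖ ≤ L * ‖h₁ - h₂‖ := by
        simpa only [dist_eq_norm] using hf.dist_le_mul h₁ h₂
    _ ≤ L * ((Hmax - Hmin) + √2 * Hmax * √(1 - scos h₁ h₂)) := by
        gcongr
        exact norm_sub_le_of_norm_mem_Icc ⟨hb1, hb1'⟩ ⟨hb2, hb2'⟩
    _ = L * (Hmax - Hmin) + L * √2 * Hmax * √(1 - scos h₁ h₂) := by ring

theorem lipschitz_cosine_bound {d m : ℕ}
    (f : EuclideanSpace ℝ (Fin d) → EuclideanSpace ℝ (Fin m))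
    (L : NNReal) (hf : LipschitzWith L f)
    (h₁ h₂ : EuclideanSpace ℝ (Fin d)) (h1 : h₁ ≠ 0) (h2 : h₂ ≠ 0)
    (Hmin Hmax : ℝ)
    (hb1 : Hmin ≤ ‖h₁‖) (hb1' : ‖h₁‖ ≤ Hmax)
    (hb2 : Hmin ≤ ‖h₂‖) (hb2' : ‖h₂‖ ≤ Hmax) :
    ‖f h₁ - f h₂‖ ≤
      (L : ℝ) * (Hmax - Hmin) +
        (L : ℝ) * Real.sqrt 2 * Hmax * Real.sqrt (1 - scos h₁ h₂) :=
  lipschitz_cosine_bound_general f L hf h₁ h₂ Hmin Hmax hb1 hb1' hb2 hb2'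
end

section
/- Let W ∈ ℝ^{m×d}, A = U_r Λ_r V_rᵀ its rank-r truncated SVD, R = W − A. For h₁, h₂ ∈ ℝ^d with Ah₁ ≠ 0 and Ah₂ ≠ 0, writing rᵢ = ‖Rhᵢ‖ and aᵢ = ‖Ahᵢ‖, one has |S_cos(Wh₁, Wh₂) − S_cos(Ah₁, Ah₂)| ≤ ½(r₁/a₁ + r₂/a₂)². -/
/-!
Write `Wh = Ah + Rh`. Since `RᵀA = 0`, the vectors `Rh₁, Rh₂` are orthogonal to the range of `A`,
so `‖Whᵢ‖² = aᵢ² + rᵢ²` and `⟪Wh₁, Wh₂⟫ = ⟪Ah₁, Ah₂⟫ + ⟪Rh₁, Rh₂⟫`. Put `tᵢ = rᵢ / aᵢ`,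
`qᵢ = ‖Whᵢ‖ / aᵢ = √(1 + tᵢ²)`, `γ = ⟪Ah₁, Ah₂⟫ / (a₁a₂)` and `σ = ⟪Rh₁, Rh₂⟫ / (a₁a₂)`. Then the
difference of cosines is `(σ - γ (q₁q₂ - 1)) / (q₁q₂)` with `|γ| ≤ 1` and `|σ| ≤ t₁t₂`
(Cauchy–Schwarz), and the bound reduces to `q₁q₂ (1 - (t₁ + t₂)² / 2) ≤ 1 - t₁t₂`, which follows
from `q₁q₂ ≤ (q₁² + q₂²) / 2`.
-/

open Matrix

open InnerProductGeometry RealInnerProductSpace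

theorem mul_one_sub_half_sq_add_le {t₁ t₂ q₁ q₂ : ℝ}
    (hq₁ : 0 ≤ q₁) (hq₂ : 0 ≤ q₂) (hq₁t : q₁ ^ 2 = 1 + t₁ ^ 2) (hq₂t : q₂ ^ 2 = 1 + t₂ ^ 2) :
    q₁ * q₂ * (1 - (t₁ + t₂) ^ 2 / 2) ≤ 1 - t₁ * t₂ := by
  rcases le_or_gt (1 - (t₁ + t₂) ^ 2 / 2) 0 with hneg | hpos
  · have hq : 1 ≤ q₁ * q₂ := by nlinarith [mul_nonneg hq₁ hq₂]
    nlinarith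
  · have hamgm : q₁ * q₂ ≤ 1 + (t₁ ^ 2 + t₂ ^ 2) / 2 := by nlinarith [sq_nonneg (q₁ - q₂)]
    nlinarith [mul_le_mul_of_nonneg_right hamgm hpos.le, sq_nonneg (t₁ + t₂)]

theorem abs_add_div_mul_sub_le {γ σ t₁ t₂ q₁ q₂ : ℝ} (hγ : |γ| ≤ 1) (hσ : |σ| ≤ t₁ * t₂)
    (hq₁ : 0 ≤ q₁) (hq₂ : 0 ≤ q₂) (hq₁t : q₁ ^ 2 = 1 + t₁ ^ 2) (hq₂t : q₂ ^ 2 = 1 + t₂ ^ 2) :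
    |(γ + σ) / (q₁ * q₂) - γ| ≤ (t₁ + t₂) ^ 2 / 2 := by
  have hq : 1 ≤ q₁ * q₂ := by nlinarith [mul_nonneg hq₁ hq₂]
  have hq0 : 0 < q₁ * q₂ := by linarith
  rw [div_sub' hq0.ne', abs_div, abs_of_pos hq0, div_le_iff₀ hq0]
  calc |γ + σ - q₁ * q₂ * γ| = |σ - γ * (q₁ * q₂ - 1)| := by ring_nf
    _ ≤ |σ| + |γ| * (q₁ * q₂ - 1) := by
        simpa only [abs_mul, abs_of_nonneg (sub_nonneg.2 hq)] using abs_sub σ (γ * (q₁ * q₂ - 1))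
    _ ≤ t₁ * t₂ + 1 * (q₁ * q₂ - 1) := by gcongr
    _ ≤ (t₁ + t₂) ^ 2 / 2 * (q₁ * q₂) := by
        nlinarith [mul_one_sub_half_sq_add_le hq₁ hq₂ hq₁t hq₂t]

section InnerProductSpace

variable {E : Type*} [NormedAddCommGroup E] [InnerProductSpace ℝ E]

theorem div_norm_add_sq_of_inner_eq_zero {u v : E} (h : ⟪u, v⟫ = 0) (hu : u ≠ 0) :
    (‖u + v‖ / ‖u‖) ^ 2 = 1 + (‖v‖ / ‖u‖) ^ 2 := by
  have hu' : ‖u‖ ≠ 0 := norm_ne_zero_iff.2 hu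
  rw [div_pow, div_pow, sq, sq, sq, norm_add_sq_eq_norm_sq_add_norm_sq_real h]
  field_simp

theorem abs_cos_angle_add_add_sub_cos_angle_le {K : Submodule ℝ E} {u₁ u₂ v₁ v₂ : E}
    (hu₁ : u₁ ∈ K) (hu₂ : u₂ ∈ K) (hv₁ : v₁ ∈ Kᗮ) (hv₂ : v₂ ∈ Kᗮ) (hu₁0 : u₁ ≠ 0)
    (hu₂0 : u₂ ≠ 0) :
    |Real.cos (angle (u₁ + v₁) (u₂ + v₂)) - Real.cos (angle u₁ u₂)| ≤
      (‖v₁‖ / ‖u₁‖ + ‖v₂‖ / ‖u₂‖) ^ 2 / 2 := by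
  have ha₁ : 0 < ‖u₁‖ := norm_pos_iff.2 hu₁0
  have ha₂ : 0 < ‖u₂‖ := norm_pos_iff.2 hu₂0
  have hinner : ⟪u₁ + v₁, u₂ + v₂⟫ = ⟪u₁, u₂⟫ + ⟪v₁, v₂⟫ := by
    simp only [inner_add_left, inner_add_right, Submodule.inner_right_of_mem_orthogonal hu₁ hv₂,
      Submodule.inner_left_of_mem_orthogonal hu₂ hv₁]
    ring
  have hcos : Real.cos (angle (u₁ + v₁) (u₂ + v₂)) =
      (⟪u₁, u₂⟫ / (‖u₁‖ * ‖u₂‖) + ⟪v₁, v₂⟫ / (‖u₁‖ * ‖u₂‖)) /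
        (‖u₁ + v₁‖ / ‖u₁‖ * (‖u₂ + v₂‖ / ‖u₂‖)) := by
    rw [cos_angle, hinner]
    field_simp
  have hσ : |⟪v₁, v₂⟫ / (‖u₁‖ * ‖u₂‖)| ≤ ‖v₁‖ / ‖u₁‖ * (‖v₂‖ / ‖u₂‖) := by
    rw [abs_div, abs_of_pos (mul_pos ha₁ ha₂), div_mul_div_comm]
    gcongr
    exact abs_real_inner_le_norm v₁ v₂
  rw [hcos, cos_angle]
  exact abs_add_div_mul_sub_le (abs_real_inner_div_norm_mul_norm_le_one u₁ u₂) hσ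
    (by positivity) (by positivity)
    (div_norm_add_sq_of_inner_eq_zero (Submodule.inner_right_of_mem_orthogonal hu₁ hv₁) hu₁0)
    (div_norm_add_sq_of_inner_eq_zero (Submodule.inner_right_of_mem_orthogonal hu₂ hv₂) hu₂0)

end InnerProductSpace

theorem Matrix.toEuclideanLin_mem_orthogonal_range {m n p : Type*} [Fintype m] [Fintype n]
    [Fintype p] [DecidableEq m] [DecidableEq n] [DecidableEq p] {A : Matrix m n ℝ} {R : Matrix m p ℝ}
    (h : Rᵀ * A = 0) (x : EuclideanSpace ℝ p) :
    toEuclideanLin R x ∈ (LinearMap.range (toEuclideanLin A))ᗮ := by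
  rintro _ ⟨y, rfl⟩
  rw [← LinearMap.adjoint_inner_left, ← toEuclideanLin_conjTranspose_eq_adjoint,
    conjTranspose_eq_transpose_of_trivial, ← LinearMap.comp_apply, ← toLpLin_mul_same, h,
    map_zero, LinearMap.zero_apply, inner_zero_left]

theorem lowrank_cosine_error_bound {m d : ℕ}
    (W A R : Matrix (Fin m) (Fin d) ℝ) (hW : W = A + R) (hRA : Rᵀ * A = 0)
    (h₁ h₂ : EuclideanSpace ℝ (Fin d))
    (hA1 : Matrix.toEuclideanLin A h₁ ≠ 0) (hA2 : Matrix.toEuclideanLin A h₂ ≠ 0) :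
    |scos (Matrix.toEuclideanLin W h₁) (Matrix.toEuclideanLin W h₂) -
        scos (Matrix.toEuclideanLin A h₁) (Matrix.toEuclideanLin A h₂)| ≤
      (1 / 2) *
        (‖Matrix.toEuclideanLin R h₁‖ / ‖Matrix.toEuclideanLin A h₁‖ +
            ‖Matrix.toEuclideanLin R h₂‖ / ‖Matrix.toEuclideanLin A h₂‖) ^ 2 := by
  have hsplit : ∀ h, toEuclideanLin W h = toEuclideanLin A h + toEuclideanLin R h := by
    simp [hW]
  simp only [scos, hsplit, ← cos_angle, one_div_mul_eq_div]
  exact abs_cos_angle_add_add_sub_cos_angle_le (LinearMap.mem_range_self _ h₁)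
    (LinearMap.mem_range_self _ h₂) (toEuclideanLin_mem_orthogonal_range hRA h₁)
    (toEuclideanLin_mem_orthogonal_range hRA h₂) hA1 hA2
end

section
/- Let W ∈ ℝ^{m×d} have singular values λ₁ ≥ … ≥ λ_{r+1} ≥ … with λ_r > 0, and let A = U_r Λ_r V_rᵀ be its rank-r truncation. For h₁, h₂ ∈ ℝ^d with V_rᵀhᵢ ≠ 0, |S_cos(Wh₁, Wh₂) − S_cos(Λ_r V_rᵀ h₁, Λ_r V_rᵀ h₂)| ≤ ½ (λ_{r+1}/λ_r)² (‖h₁‖/‖V_rᵀh₁‖ + ‖h₂‖/‖V_rᵀh₂‖)². -/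
/-!
`U` has orthonormal columns, so `W h` has the same Gram form as the pair `(y h, z h)` in the
orthogonal sum `ℝʳ ⊕ ℝᵏ`, where `y h = Λ_r V_rᵀ h` keeps the top `r` singular directions and
`z h = Σ' Vᵀ h`, with `Σ'` the diagonal of the discarded singular values, keeps the rest. Hence
`S_cos(W h₁, W h₂)` is the cosine of `(y₁, z₁)` and `(y₂, z₂)`. With `tᵢ = ‖zᵢ‖ / ‖yᵢ‖`, the cross
term `⟪z₁, z₂⟫` moves the cosine by at most `t₁ t₂`, and stretching `‖yᵢ‖` to `‖yᵢ‖ √(1 + tᵢ²)` by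
at most `(t₁² + t₂²) / 2` (AM-GM), for a total of `(t₁ + t₂)² / 2`. Finally `‖zᵢ‖ ≤ λ_{r+1} ‖hᵢ‖`
and `‖yᵢ‖ ≥ λ_r ‖V_rᵀ hᵢ‖`.
-/

open Matrix

open InnerProductGeometry
open scoped RealInnerProductSpace

theorem abs_add_div_mul_sub_div_mul_le {b c p₁ p₂ q₁ q₂ n₁ n₂ : ℝ}
    (hp₁ : 0 < p₁) (hp₂ : 0 < p₂) (hq₁ : 0 ≤ q₁) (hq₂ : 0 ≤ q₂)
    (hn₁ : n₁ ^ 2 = p₁ ^ 2 + q₁ ^ 2) (hn₂ : n₂ ^ 2 = p₂ ^ 2 + q₂ ^ 2)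
    (hn₁0 : 0 ≤ n₁) (hn₂0 : 0 ≤ n₂)
    (hb : |b| ≤ p₁ * p₂) (hc : |c| ≤ q₁ * q₂) :
    |(b + c) / (n₁ * n₂) - b / (p₁ * p₂)| ≤ (q₁ / p₁ + q₂ / p₂) ^ 2 / 2 := by
  obtain ⟨t₁, ht₁, rfl⟩ : ∃ t, 0 ≤ t ∧ q₁ = t * p₁ := ⟨q₁ / p₁, by positivity, by field_simp⟩
  obtain ⟨t₂, ht₂, rfl⟩ : ∃ t, 0 ≤ t ∧ q₂ = t * p₂ := ⟨q₂ / p₂, by positivity, by field_simp⟩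
  set s := (t₁ ^ 2 + t₂ ^ 2) / 2
  have hpn₁ : p₁ ≤ n₁ := by nlinarith
  have hpn₂ : p₂ ≤ n₂ := by nlinarith
  have hpp : 0 < p₁ * p₂ := by positivity
  have hnn : 0 < n₁ * n₂ := by nlinarith
  have hn_le : n₁ * n₂ ≤ p₁ * p₂ * (1 + s) := by
    refine (pow_le_pow_iff_left₀ hnn.le (by positivity) two_ne_zero).mp ?_
    calc (n₁ * n₂) ^ 2 = (p₁ * p₂) ^ 2 * ((1 + t₁ ^ 2) * (1 + t₂ ^ 2)) := by
          rw [mul_pow, hn₁, hn₂]; ring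
      _ ≤ (p₁ * p₂) ^ 2 * (1 + s) ^ 2 := by
          -- AM-GM: `(1 + s)² - (1 + t₁²)(1 + t₂²) = ((t₁² - t₂²) / 2)²`
          gcongr; simp only [s]; nlinarith [sq_nonneg (t₁ ^ 2 - t₂ ^ 2)]
      _ = _ := by ring
  set ρ := p₁ * p₂ / (n₁ * n₂)
  have hρ1 : ρ ≤ 1 := div_le_one_of_le₀ (mul_le_mul hpn₁ hpn₂ hp₂.le (by linarith)) hnn.le
  -- `ρ ≥ 1 / (1 + s) ≥ 1 - s`
  have hρs : 1 - s ≤ ρ := by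
    rw [le_div_iff₀ hnn]
    nlinarith [mul_nonneg (mul_nonneg hpp.le (by positivity : 0 ≤ s)) (by positivity : 0 ≤ s)]
  have hβ : |b / (p₁ * p₂)| ≤ 1 := by
    rw [abs_div, abs_of_pos hpp]; exact div_le_one_of_le₀ hb hpp.le
  have hγ : |c / (n₁ * n₂)| ≤ t₁ * t₂ := by
    rw [abs_div, abs_of_pos hnn, div_le_iff₀ hnn]
    calc |c| ≤ t₁ * t₂ * (p₁ * p₂) := by linarith
      _ ≤ t₁ * t₂ * (n₁ * n₂) := by gcongr
  have key : (b + c) / (n₁ * n₂) - b / (p₁ * p₂) = c / (n₁ * n₂) - b / (p₁ * p₂) * (1 - ρ) := by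
    field_simp; ring
  calc |(b + c) / (n₁ * n₂) - b / (p₁ * p₂)|
      ≤ |c / (n₁ * n₂)| + |b / (p₁ * p₂)| * (1 - ρ) := by
        rw [key]
        exact (abs_sub _ _).trans_eq (by rw [abs_mul, abs_of_nonneg (sub_nonneg.2 hρ1)])
    _ ≤ t₁ * t₂ + 1 * s := by gcongr; linarith
    _ = (t₁ * p₁ / p₁ + t₂ * p₂ / p₂) ^ 2 / 2 := by field_simp; ring

section InnerProductSpace

variable {E F : Type*} [NormedAddCommGroup E] [InnerProductSpace ℝ E]
  [NormedAddCommGroup F] [InnerProductSpace ℝ F]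

theorem angle_eq_angle_of_inner_eq {α : Type*} {A : α → E} {B : α → F}
    (hAB : ∀ a b, ⟪A a, A b⟫ = ⟪B a, B b⟫) (a b : α) : angle (A a) (A b) = angle (B a) (B b) := by
  simp only [angle, norm_eq_sqrt_real_inner, hAB]

theorem abs_cos_angle_toLp_prod_sub_cos_angle_le {y₁ y₂ : E} {z₁ z₂ : F}
    (hy₁ : y₁ ≠ 0) (hy₂ : y₂ ≠ 0) :
    |Real.cos (angle (WithLp.toLp 2 (y₁, z₁)) (WithLp.toLp 2 (y₂, z₂))) - Real.cos (angle y₁ y₂)| ≤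
      (‖z₁‖ / ‖y₁‖ + ‖z₂‖ / ‖y₂‖) ^ 2 / 2 := by
  rw [cos_angle, cos_angle, WithLp.prod_inner_apply]
  exact abs_add_div_mul_sub_div_mul_le (norm_pos_iff.2 hy₁) (norm_pos_iff.2 hy₂)
    (norm_nonneg _) (norm_nonneg _) (WithLp.prod_norm_sq_eq_of_L2 _)
    (WithLp.prod_norm_sq_eq_of_L2 _) (norm_nonneg _) (norm_nonneg _) (abs_real_inner_le_norm _ _)
    (abs_real_inner_le_norm _ _)

end InnerProductSpace

namespace EuclideanSpace

variable {n : Type*} [Fintype n]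

theorem norm_le_norm_of_forall_abs_le {x y : EuclideanSpace ℝ n} (h : ∀ i, |x i| ≤ |y i|) :
    ‖x‖ ≤ ‖y‖ := by
  rw [EuclideanSpace.norm_eq, EuclideanSpace.norm_eq]
  gcongr with i
  exact h i

end EuclideanSpace

namespace Matrix

variable {ι κ m n : Type*} [Fintype ι] [Fintype κ] [Fintype m] [Fintype n]
  [DecidableEq ι] [DecidableEq κ] [DecidableEq m] [DecidableEq n]

@[simp]
theorem toEuclideanLin_diagonal_apply (s : n → ℝ) (x : EuclideanSpace ℝ n) (i : n) :
    toEuclideanLin (diagonal s) x i = s i * x i :=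
  mulVec_diagonal s (WithLp.ofLp x) i

theorem inner_toEuclideanLin_of_transpose_mul_self {U : Matrix m n ℝ} (hU : Uᵀ * U = 1)
    (x y : EuclideanSpace ℝ n) : ⟪toEuclideanLin U x, toEuclideanLin U y⟫ = ⟪x, y⟫ := by
  rw [← LinearMap.adjoint_inner_right, ← toEuclideanLin_conjTranspose_eq_adjoint,
    conjTranspose_eq_transpose_of_trivial, ← LinearMap.comp_apply, ← toLpLin_mul_same, hU,
    toLpLin_one, LinearMap.id_apply]

theorem norm_toEuclideanLin_of_transpose_mul_self {U : Matrix m n ℝ} (hU : Uᵀ * U = 1)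
    (x : EuclideanSpace ℝ n) : ‖toEuclideanLin U x‖ = ‖x‖ := by
  rw [norm_eq_sqrt_real_inner, norm_eq_sqrt_real_inner,
    inner_toEuclideanLin_of_transpose_mul_self hU]

theorem norm_toEuclideanLin_transpose_le {V : Matrix n m ℝ} (hV : Vᵀ * V = 1)
    (x : EuclideanSpace ℝ n) : ‖toEuclideanLin Vᵀ x‖ ≤ ‖x‖ := by
  set u := toEuclideanLin Vᵀ x
  have hu : ‖u‖ ^ 2 ≤ ‖u‖ * ‖x‖ := calc
    ‖u‖ ^ 2 = ⟪toEuclideanLin V u, x⟫ := by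
      rw [← LinearMap.adjoint_inner_right, ← toEuclideanLin_conjTranspose_eq_adjoint,
        conjTranspose_eq_transpose_of_trivial, real_inner_self_eq_norm_sq]
    _ ≤ ‖u‖ * ‖x‖ := by
      rw [← norm_toEuclideanLin_of_transpose_mul_self hV u]; exact real_inner_le_norm _ _
  nlinarith [norm_nonneg u, norm_nonneg x]

theorem norm_toEuclideanLin_diagonal_le {s : n → ℝ} {c : ℝ} (hc : 0 ≤ c) (hs : ∀ i, |s i| ≤ c)
    (x : EuclideanSpace ℝ n) : ‖toEuclideanLin (diagonal s) x‖ ≤ c * ‖x‖ := by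
  rw [← Real.norm_of_nonneg hc, ← norm_smul]
  refine EuclideanSpace.norm_le_norm_of_forall_abs_le fun i => ?_
  simp only [toEuclideanLin_diagonal_apply, PiLp.smul_apply, smul_eq_mul, abs_mul, abs_of_nonneg hc]
  gcongr
  exact hs i

theorem mul_norm_le_norm_toEuclideanLin_diagonal {s : n → ℝ} {c : ℝ} (hc : 0 ≤ c)
    (hs : ∀ i, c ≤ |s i|) (x : EuclideanSpace ℝ n) : c * ‖x‖ ≤ ‖toEuclideanLin (diagonal s) x‖ := by
  rw [← Real.norm_of_nonneg hc, ← norm_smul]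
  refine EuclideanSpace.norm_le_norm_of_forall_abs_le fun i => ?_
  simp only [toEuclideanLin_diagonal_apply, PiLp.smul_apply, smul_eq_mul, abs_mul, abs_of_nonneg hc]
  gcongr
  exact hs i

theorem inner_toEuclideanLin_diagonal_mul_transpose {e : ι → κ} (he : Function.Injective e)
    (σ : κ → ℝ) (V : Matrix n κ ℝ) (h h' : EuclideanSpace ℝ n) :
    ⟪toEuclideanLin (diagonal σ * Vᵀ) h, toEuclideanLin (diagonal σ * Vᵀ) h'⟫ =
      ⟪toEuclideanLin (diagonal (σ ∘ e) * (V.submatrix id e)ᵀ) h,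
          toEuclideanLin (diagonal (σ ∘ e) * (V.submatrix id e)ᵀ) h'⟫ +
        ⟪toEuclideanLin (diagonal ((Set.range e)ᶜ.indicator σ) * Vᵀ) h,
          toEuclideanLin (diagonal ((Set.range e)ᶜ.indicator σ) * Vᵀ) h'⟫ := by
  have hsub : ∀ x, toEuclideanLin (V.submatrix id e)ᵀ x =
      WithLp.toLp 2 (fun j => toEuclideanLin Vᵀ x (e j)) := fun x => rfl
  simp only [toLpLin_mul_same, LinearMap.comp_apply, hsub, PiLp.inner_apply,
    toEuclideanLin_diagonal_apply, Function.comp_apply]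
  set u := toEuclideanLin Vᵀ h
  set u' := toEuclideanLin Vᵀ h'
  set G : κ → ℝ := fun l => ⟪σ l * u l, σ l * u' l⟫
  have head : ∑ j, G (e j) = ∑ l, (Set.range e).indicator G l :=
    Fintype.sum_of_injective e he _ _ (fun l hl => Set.indicator_of_notMem hl G)
      (fun j => (Set.indicator_of_mem (Set.mem_range_self j) G).symm)
  have tail (l : κ) : ⟪(Set.range e)ᶜ.indicator σ l * u l, (Set.range e)ᶜ.indicator σ l * u' l⟫ =
      (Set.range e)ᶜ.indicator G l := by
    by_cases hl : l ∈ Set.range e <;> simp [hl, G]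
  rw [head, Fintype.sum_congr _ _ tail, ← Finset.sum_add_distrib]
  simp only [Set.indicator_self_add_compl_apply]

end Matrix

section Truncation

variable {k r : ℕ} {σ : Fin k → ℝ}

theorem mul_norm_le_norm_toEuclideanLin_diagonal_comp_castLE (hσ : Antitone σ)
    (hσ0 : ∀ i, 0 ≤ σ i) (hr : r < k) (x : EuclideanSpace ℝ (Fin r)) :
    σ ⟨r - 1, (Nat.sub_le r 1).trans_lt hr⟩ * ‖x‖ ≤
      ‖toEuclideanLin (diagonal (σ ∘ Fin.castLE hr.le)) x‖ := by
  refine mul_norm_le_norm_toEuclideanLin_diagonal (hσ0 _) (fun j => ?_) x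
  rw [Function.comp_apply, abs_of_nonneg (hσ0 _)]
  exact hσ (Fin.le_iff_val_le_val.2 (by simp only [Fin.val_castLE]; omega))

theorem norm_toEuclideanLin_diagonal_indicator_compl_range_castLE_le (hσ : Antitone σ)
    (hσ0 : ∀ i, 0 ≤ σ i) (hr : r < k) (x : EuclideanSpace ℝ (Fin k)) :
    ‖toEuclideanLin (diagonal ((Set.range (Fin.castLE hr.le))ᶜ.indicator σ)) x‖ ≤
      σ ⟨r, hr⟩ * ‖x‖ := by
  refine norm_toEuclideanLin_diagonal_le (hσ0 _) (fun l => ?_) x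
  by_cases hl : l ∈ Set.range (Fin.castLE hr.le)
  · rw [Set.indicator_of_notMem (Set.notMem_compl_iff.2 hl), abs_zero]
    exact hσ0 _
  · rw [Set.indicator_of_mem hl, abs_of_nonneg (hσ0 l)]
    exact hσ (by simpa [Fin.range_castLE, Fin.le_def] using hl)

end Truncation

theorem truncated_svd_cosine_error_bound {m d k : ℕ} (r : ℕ)
    (hr : r < k)
    (U : Matrix (Fin m) (Fin k) ℝ) (V : Matrix (Fin d) (Fin k) ℝ)
    (σ : Fin k → ℝ) (hU : Uᵀ * U = 1) (hV : Vᵀ * V = 1)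
    (hσmono : Antitone σ) (hσ0 : ∀ i, 0 ≤ σ i)
    (hσr : 0 < σ ⟨r - 1, by omega⟩)
    (W : Matrix (Fin m) (Fin d) ℝ) (hW : W = U * diagonal σ * Vᵀ)
    (Vr : Matrix (Fin d) (Fin r) ℝ) (hVr : Vr = V.submatrix id (Fin.castLE hr.le))
    (Λr : Matrix (Fin r) (Fin r) ℝ)
    (hΛr : Λr = diagonal (fun i : Fin r => σ (Fin.castLE hr.le i)))
    (h₁ h₂ : EuclideanSpace ℝ (Fin d))
    (hV1 : Matrix.toEuclideanLin Vrᵀ h₁ ≠ 0) (hV2 : Matrix.toEuclideanLin Vrᵀ h₂ ≠ 0) :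
    |scos (Matrix.toEuclideanLin W h₁) (Matrix.toEuclideanLin W h₂) -
        scos (Matrix.toEuclideanLin (Λr * Vrᵀ) h₁) (Matrix.toEuclideanLin (Λr * Vrᵀ) h₂)| ≤
      (1 / 2) * (σ ⟨r, hr⟩ / σ ⟨r - 1, by omega⟩) ^ 2 *
        (‖h₁‖ / ‖Matrix.toEuclideanLin Vrᵀ h₁‖ +
            ‖h₂‖ / ‖Matrix.toEuclideanLin Vrᵀ h₂‖) ^ 2 := by
  subst hW hVr hΛr
  set e := Fin.castLE hr.le
  set σr := σ ⟨r, hr⟩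
  set σr' := σ ⟨r - 1, by omega⟩
  set v := fun h => toEuclideanLin (V.submatrix id e)ᵀ h
  set y := fun h => toEuclideanLin (diagonal (σ ∘ e) * (V.submatrix id e)ᵀ) h
  set z := fun h => toEuclideanLin (diagonal ((Set.range e)ᶜ.indicator σ) * Vᵀ) h
  have hgram (h h' : EuclideanSpace ℝ (Fin d)) :
      ⟪toEuclideanLin (U * diagonal σ * Vᵀ) h, toEuclideanLin (U * diagonal σ * Vᵀ) h'⟫ =
        ⟪WithLp.toLp 2 (y h, z h), WithLp.toLp 2 (y h', z h')⟫ := by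
    rw [WithLp.prod_inner_apply,
      ← inner_toEuclideanLin_diagonal_mul_transpose (Fin.castLE_injective _), Matrix.mul_assoc,
      toLpLin_mul_same, LinearMap.comp_apply, LinearMap.comp_apply,
      inner_toEuclideanLin_of_transpose_mul_self hU]
  have hz (h : EuclideanSpace ℝ (Fin d)) : ‖z h‖ ≤ σr * ‖h‖ := by
    simp only [z, toLpLin_mul_same, LinearMap.comp_apply]
    exact (norm_toEuclideanLin_diagonal_indicator_compl_range_castLE_le hσmono hσ0 hr _).trans
      (mul_le_mul_of_nonneg_left (norm_toEuclideanLin_transpose_le hV h) (hσ0 _))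
  have hy (h : EuclideanSpace ℝ (Fin d)) : σr' * ‖v h‖ ≤ ‖y h‖ := by
    simp only [y, v, toLpLin_mul_same, LinearMap.comp_apply]
    exact mul_norm_le_norm_toEuclideanLin_diagonal_comp_castLE hσmono hσ0 hr _
  have hratio (h : EuclideanSpace ℝ (Fin d)) (hv : v h ≠ 0) :
      y h ≠ 0 ∧ ‖z h‖ / ‖y h‖ ≤ σr / σr' * (‖h‖ / ‖v h‖) := by
    have hv' : 0 < σr' * ‖v h‖ := mul_pos hσr (norm_pos_iff.2 hv)
    refine ⟨norm_pos_iff.1 (hv'.trans_le (hy h)), ?_⟩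
    rw [← mul_div_mul_comm]
    exact div_le_div₀ (mul_nonneg (hσ0 _) (norm_nonneg h)) (hz h) hv' (hy h)
  obtain ⟨hy₁, hq₁⟩ := hratio h₁ hV1
  obtain ⟨hy₂, hq₂⟩ := hratio h₂ hV2
  rw [scos, scos, ← cos_angle, ← cos_angle, angle_eq_angle_of_inner_eq hgram]
  calc _ ≤ (‖z h₁‖ / ‖y h₁‖ + ‖z h₂‖ / ‖y h₂‖) ^ 2 / 2 :=
        abs_cos_angle_toLp_prod_sub_cos_angle_le hy₁ hy₂
    _ ≤ (σr / σr' * (‖h₁‖ / ‖v h₁‖) + σr / σr' * (‖h₂‖ / ‖v h₂‖)) ^ 2 / 2 := by gcongr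
    _ = _ := by ring
end
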